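/- (Uncoded transmission does not benefit from collective measurement: achievability part) Let γ ∈ [0,1] and n ≥ 1. Set ρ_0 = ρ₊ and ρ_1 = ρ₋, and for each x ∈ {0,1}^n let σ_x(u, v) = ∏_{j=1}^n (N_γ(ρ_{x_j}))(u_j, v_j) and Π_x(u, v) = ∏_{j=1}^n ρ_{x_j}(u_j, v_j), both indexed by {0,1}^n × {0,1}^n. Then (Π_x)_{x ∈ {0,1}^n} is a POVM (each Π_x is positive semidefinite and Σ_x Π_x = I), and 2^{−n} · Σ_{x ∈ {0,1}^n} Re Tr(Π_x σ_x) = ((1 + √(1−γ))/2)^n; i.e., performing the optimal single-use measurement individually on each output achieves average success probability ((1 + √(1−γ))/2)^n. -/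

import Mathlib

open Matrix Complex
open scoped ComplexOrder

/-- Kraus operator `K₀` of the qubit amplitude damping channel. -/
noncomputable def K₀ (γ : ℝ) : Matrix (Fin 2) (Fin 2) ℂ :=
  !![1, 0; 0, (Real.sqrt (1 - γ) : ℂ)]

/-- Kraus operator `K₁` of the qubit amplitude damping channel. -/
noncomputable def K₁ (γ : ℝ) : Matrix (Fin 2) (Fin 2) ℂ :=
  !![0, (Real.sqrt γ : ℂ); 0, 0]

/-- The qubit amplitude damping channel with damping parameter `γ`. -/
noncomputable def ADC (γ : ℝ) (ρ : Matrix (Fin 2) (Fin 2) ℂ) : Matrix (Fin 2) (Fin 2) ℂ :=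
  K₀ γ * ρ * (K₀ γ)ᴴ + K₁ γ * ρ * (K₁ γ)ᴴ

/-- The state `ρ₊ = |+⟩⟨+|`. -/
noncomputable def ρPlus : Matrix (Fin 2) (Fin 2) ℂ := (1/2 : ℂ) • !![1, 1; 1, 1]

/-- The state `ρ₋ = |−⟩⟨−|`. -/
noncomputable def ρMinus : Matrix (Fin 2) (Fin 2) ℂ := (1/2 : ℂ) • !![1, -1; -1, 1]

/-- The encoding `0 ↦ ρ₊`, `1 ↦ ρ₋`. -/
noncomputable def ρbit (i : Fin 2) : Matrix (Fin 2) (Fin 2) ℂ :=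
  if i = 0 then ρPlus else ρMinus

/-- The tensor-product channel output `N_γ(ρ_{x₁}) ⊗ ⋯ ⊗ N_γ(ρ_{xₙ})` for the uncoded word
`x ∈ {0,1}ⁿ`, realized as a matrix indexed by `{0,1}ⁿ` with entrywise products. -/
noncomputable def σout (γ : ℝ) (n : ℕ) (x : Fin n → Fin 2) :
    Matrix (Fin n → Fin 2) (Fin n → Fin 2) ℂ :=
  Matrix.of fun u v => ∏ j, (ADC γ (ρbit (x j))) (u j) (v j)

/-- The tensor-product measurement operator `ρ_{x₁} ⊗ ⋯ ⊗ ρ_{xₙ}` (individual optimal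
single-use measurements). -/
noncomputable def Pind (n : ℕ) (x : Fin n → Fin 2) :
    Matrix (Fin n → Fin 2) (Fin n → Fin 2) ℂ :=
  Matrix.of fun u v => ∏ j, (ρbit (x j)) (u j) (v j)

/-! Everything factors over the `n` channel uses: `Π_x` and `σ_x` are Kronecker products
`⊗ⱼ ρ_{xⱼ}` and `⊗ⱼ N_γ(ρ_{xⱼ})`, and the Kronecker product of a family is multilinear,
multiplicative, and turns traces into products. Hence `Π_x` is positive because each `ρ_{xⱼ}` is,
`∑ₓ Π_x = (ρ₊ + ρ₋)^{⊗n} = 1`, and `Tr(Π_x σ_x) = ∏ⱼ Tr(ρ_{xⱼ} N_γ(ρ_{xⱼ})) = ((1 + √(1 - γ)) / 2)ⁿ`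
for every word `x`. -/

namespace Matrix

section piKron

variable {σ ι R : Type*} [Fintype σ] [CommSemiring R]

def piKron (A : σ → Matrix ι ι R) : Matrix (σ → ι) (σ → ι) R :=
  of fun u v => ∏ j, A j (u j) (v j)

theorem piKron_sum [DecidableEq σ] {κ : σ → Type*} [∀ j, Fintype (κ j)]
    (A : ∀ j, κ j → Matrix ι ι R) :
    piKron (fun j => ∑ k, A j k) = ∑ k : ∀ j, κ j, piKron fun j => A j (k j) := by
  ext u v
  simp [piKron, sum_apply, Fintype.prod_sum]

theorem piKron_mul [DecidableEq σ] [Fintype ι] (A B : σ → Matrix ι ι R) :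
    piKron A * piKron B = piKron fun j => A j * B j := by
  ext u w
  simp [piKron, mul_apply, Fintype.prod_sum, Finset.prod_mul_distrib]

theorem trace_piKron [DecidableEq σ] [Fintype ι] (A : σ → Matrix ι ι R) :
    (piKron A).trace = ∏ j, (A j).trace := by
  simp [piKron, trace, Fintype.prod_sum]

theorem piKron_one [DecidableEq ι] : piKron (fun _ : σ => (1 : Matrix ι ι R)) = 1 := by
  ext u v
  simp [piKron, one_apply, Finset.prod_boole, funext_iff]

theorem piKron_vecMulVec (v w : σ → ι → R) :
    piKron (fun j => vecMulVec (v j) (w j)) =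
      vecMulVec (fun u => ∏ j, v j (u j)) (fun u => ∏ j, w j (u j)) := by
  ext u u'
  simp [piKron, vecMulVec_apply, Finset.prod_mul_distrib]

end piKron

theorem PosSemidef.piKron {σ ι 𝕜 : Type*} [Fintype σ] [DecidableEq σ] [Fintype ι] [RCLike 𝕜]
    {A : σ → Matrix ι ι 𝕜} (hA : ∀ j, (A j).PosSemidef) : (piKron A).PosSemidef := by
  choose m v hv using fun j => posSemidef_iff_eq_sum_vecMulVec.mp (hA j)
  rw [funext hv, piKron_sum]
  refine posSemidef_sum _ fun k _ => ?_
  rw [piKron_vecMulVec]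
  convert posSemidef_vecMulVec_self_star fun u : σ → ι => ∏ j, v j (k j) (u j)
  simp [star_prod]

end Matrix

theorem sum_ρbit : ∑ i, ρbit i = 1 := by
  ext a b
  fin_cases a <;> fin_cases b <;> norm_num [ρbit, ρPlus, ρMinus]

theorem ρbit_posSemidef (i : Fin 2) : (ρbit i).PosSemidef := by
  obtain ⟨s, hs⟩ : ∃ s : ℂ, ρbit i = (1 / 2 : ℂ) • vecMulVec ![1, s] (star ![1, s]) :=
    ⟨if i = 0 then 1 else -1, by
      ext a b
      simp only [Matrix.smul_apply, vecMulVec_apply, Pi.star_apply]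
      fin_cases i <;> fin_cases a <;> fin_cases b <;> simp [ρbit, ρPlus, ρMinus]⟩
  rw [hs]
  exact (posSemidef_vecMulVec_self_star _).smul (by norm_num [le_def])

theorem trace_ρbit_mul_ADC {γ : ℝ} (hγ0 : 0 ≤ γ) (hγ1 : γ ≤ 1) (i : Fin 2) :
    (ρbit i * ADC γ (ρbit i)).trace = ((1 + √(1 - γ)) / 2 : ℝ) := by
  have h1 : (√(1 - γ) : ℂ) * √(1 - γ) = 1 - γ := by
    rw [← ofReal_mul, Real.mul_self_sqrt (by linarith)]; push_cast; ring
  have h2 : (√γ : ℂ) * √γ = γ := by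
    rw [← ofReal_mul, Real.mul_self_sqrt hγ0]
  fin_cases i <;>
    simp [ρbit, ADC, K₀, K₁, ρPlus, ρMinus, trace_fin_two, conjTranspose_apply, vecMul,
      dotProduct] <;>
    linear_combination (1 / 4 : ℂ) * h1 + (1 / 4 : ℂ) * h2

theorem stmt11_general (γ : ℝ) (hγ0 : 0 ≤ γ) (hγ1 : γ ≤ 1) (n : ℕ) :
    (∀ x : Fin n → Fin 2, (Pind n x).PosSemidef) ∧
    (∑ x : Fin n → Fin 2, Pind n x = 1) ∧
    ((2 : ℝ) ^ n)⁻¹ * ∑ x : Fin n → Fin 2, (Pind n x * σout γ n x).trace.re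
      = ((1 + Real.sqrt (1 - γ)) / 2) ^ n := by
  have hPind (x : Fin n → Fin 2) : Pind n x = piKron fun j => ρbit (x j) := rfl
  have hσout (x : Fin n → Fin 2) : σout γ n x = piKron fun j => ADC γ (ρbit (x j)) := rfl
  refine ⟨fun x => PosSemidef.piKron fun j => ρbit_posSemidef (x j), ?_, ?_⟩
  · simp only [hPind, ← piKron_sum, sum_ρbit, piKron_one]
  · have hsuccess (x : Fin n → Fin 2) :
        (Pind n x * σout γ n x).trace.re = ((1 + √(1 - γ)) / 2) ^ n := by
      simp only [hPind, hσout, piKron_mul, trace_piKron, trace_ρbit_mul_ADC hγ0 hγ1,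
        Finset.prod_const, Finset.card_univ, Fintype.card_fin, ← ofReal_pow, ofReal_re]
    simp [hsuccess]

/-- uncoded transmission, achievability part: the tensor products
`Π_x = ρ_{x₁} ⊗ ⋯ ⊗ ρ_{xₙ}` form a POVM on `ℂ^{2ⁿ}`, and performing these individual optimal
single-use measurements achieves average success probability `((1 + √(1−γ))/2)ⁿ` for the
uncoded scheme over `n` uses of the ADC. -/
theorem stmt11 (γ : ℝ) (hγ0 : 0 ≤ γ) (hγ1 : γ ≤ 1) (n : ℕ) (hn : 1 ≤ n) :
    (∀ x : Fin n → Fin 2, (Pind n x).PosSemidef) ∧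
    (∑ x : Fin n → Fin 2, Pind n x = 1) ∧
    ((2 : ℝ) ^ n)⁻¹ * ∑ x : Fin n → Fin 2, (Pind n x * σout γ n x).trace.re
      = ((1 + Real.sqrt (1 - γ)) / 2) ^ n :=
  stmt11_general γ hγ0 hγ1 n
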